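/- arXiv:2303.05920 — 4 statements merged into one kernel-verified Lean document; each statement's English description precedes it below -/
import Mathlib

section
/- Let M = (V, I) be a matroid on a finite ground set V, let S ∈ I be an independent set, let v ∈ V \ S be an element with S + v ∉ I, and let B ⊆ S. Then there exists an element u ∈ B with S + v − u ∈ I if and only if (S + v) \ B ∈ I. -/
/-- A matroid on a finite ground set `V`, given by its family of independent sets. -/
structure FinMatroid (V : Type*) [DecidableEq V] [Fintype V] where
  Indep : Finset V → Prop
  indep_empty : Indep ∅
  indep_subset : ∀ ⦃S T : Finset V⦄, Indep S → T ⊆ S → Indep T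
  indep_aug : ∀ ⦃S T : Finset V⦄, Indep S → Indep T → T.card < S.card →
    ∃ x ∈ S \ T, Indep (insert x T)

/-- Any independent set `T` can be augmented from an independent set `S` up to size `S.card`,
staying inside `T ∪ S`. -/
lemma FinMatroid.exists_extend {V : Type*} [DecidableEq V] [Fintype V] (M : FinMatroid V) :
    ∀ n (S T : Finset V), M.Indep S → M.Indep T → T.card + n = S.card →
      ∃ A, M.Indep A ∧ T ⊆ A ∧ A ⊆ T ∪ S ∧ A.card = S.card := by
  intro n
  induction n with
  | zero =>
    intro S T hS hT h
    exact ⟨T, hT, subset_rfl, Finset.subset_union_left, by omega⟩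
  | succ n ih =>
    intro S T hS hT h
    obtain ⟨x, hx, hxi⟩ := M.indep_aug hS hT (by omega)
    rw [Finset.mem_sdiff] at hx
    obtain ⟨A, hA, hTA, hAsub, hcard⟩ := ih S (insert x T) hS hxi
      (by rw [Finset.card_insert_of_notMem hx.2]; omega)
    refine ⟨A, hA, (Finset.subset_insert x T).trans hTA, ?_, hcard⟩
    intro a ha
    rcases Finset.mem_union.mp (hAsub ha) with h1 | h1
    · rcases Finset.mem_insert.mp h1 with rfl | h2
      · exact Finset.mem_union_right _ hx.1
      · exact Finset.mem_union_left _ h2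
    · exact Finset.mem_union_right _ h1

/-- Correctness criterion of the binary-search procedure `FindOutEdge`:
there is `u ∈ B` with `S + v − u` independent iff `(S + v) \ B` is independent. -/
theorem findOutEdge_criterion {V : Type*} [DecidableEq V] [Fintype V]
    (M : FinMatroid V) (S : Finset V) (hS : M.Indep S) (v : V) (hv : v ∉ S)
    (hdep : ¬ M.Indep (insert v S)) (B : Finset V) (hB : B ⊆ S) :
    (∃ u ∈ B, M.Indep (insert v (S.erase u))) ↔ M.Indep ((insert v S) \ B) := by
  constructor
  · rintro ⟨u, huB, hu⟩
    refine M.indep_subset hu ?_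
    intro a ha
    rw [Finset.mem_sdiff, Finset.mem_insert] at ha
    rcases ha.1 with rfl | haS
    · exact Finset.mem_insert_self _ _
    · exact Finset.mem_insert_of_mem (Finset.mem_erase.mpr ⟨fun h => ha.2 (h ▸ huB), haS⟩)
  · intro hT
    set T : Finset V := (insert v S) \ B with hTdef
    have hBsub : B ⊆ insert v S := hB.trans (Finset.subset_insert _ _)
    have hBne : B.Nonempty := by
      rcases B.eq_empty_or_nonempty with rfl | h
      · exact absurd (by simpa [hTdef] using hT) hdep
      · exact h
    have hcardT : T.card = S.card + 1 - B.card := by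
      rw [hTdef, Finset.card_sdiff_of_subset hBsub, Finset.card_insert_of_notMem hv]
    have hBcard : 1 ≤ B.card := Finset.card_pos.mpr hBne
    have hBle : B.card ≤ S.card := Finset.card_le_card hB
    obtain ⟨A, hA, hTA, hAsub, hAcard⟩ := M.exists_extend (B.card - 1) S T hS hT (by omega)
    have hAS : A ⊆ insert v S := by
      intro a ha
      rcases Finset.mem_union.mp (hAsub ha) with h1 | h1
      · exact (Finset.sdiff_subset) h1
      · exact Finset.mem_insert_of_mem h1
    have hvT : v ∈ T := Finset.mem_sdiff.mpr ⟨Finset.mem_insert_self _ _, fun h => hv (hB h)⟩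
    have hvA : v ∈ A := hTA hvT
    -- find u ∈ S \ A
    have : ¬ S ⊆ A := by
      intro hSA
      have : insert v S ⊆ A := Finset.insert_subset hvA hSA
      have := Finset.card_le_card this
      rw [Finset.card_insert_of_notMem hv, hAcard] at this
      omega
    obtain ⟨u, huS, huA⟩ := Set.not_subset.mp (by exact_mod_cast this)
    have huB : u ∈ B := by
      by_contra h
      exact huA (hTA (Finset.mem_sdiff.mpr ⟨Finset.mem_insert_of_mem huS, h⟩))
    refine ⟨u, huB, ?_⟩
    have hsub : A ⊆ insert v (S.erase u) := by
      intro a ha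
      rcases Finset.mem_insert.mp (hAS ha) with rfl | h1
      · exact Finset.mem_insert_self _ _
      · exact Finset.mem_insert_of_mem (Finset.mem_erase.mpr ⟨fun h => huA (h ▸ ha), h1⟩)
    have hcard2 : (insert v (S.erase u)).card ≤ A.card := by
      rw [Finset.card_insert_of_notMem (fun h => hv (Finset.erase_subset _ _ h)),
        Finset.card_erase_of_mem huS, hAcard]
      omega
    rw [← Finset.eq_of_subset_of_card_le hsub hcard2]
    exact hA
end

section
/- There exists a universal constant c > 0 such that the following holds: for any two matroids M' = (V, I') and M'' = (V, I'') over a common finite ground set V, any common independent set S ∈ I' ∩ I'', and any positive integer d, if the length of every (s, t)-path in the exchange graph G(S) is at least d (in particular, if d(s, t) ≥ d), then |S| ≥ (1 − c/d)·r, where r is the maximum size of a common independent set in I' ∩ I''. -/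
/-- `reachIn Adj n x y` : there is a directed walk with exactly `n` edges from `x` to `y`. -/
def reachIn {α : Type*} (Adj : α → α → Prop) : ℕ → α → α → Prop
  | 0, x, y => x = y
  | n + 1, x, y => ∃ z, Adj x z ∧ reachIn Adj n z y

/-- Distance (number of edges of a shortest directed path) from `x` to `y`; `⊤` if none. -/
noncomputable def ddist {α : Type*} (Adj : α → α → Prop) (x y : α) : ℕ∞ :=
  sInf {n : ℕ∞ | ∃ m : ℕ, n = (m : ℕ∞) ∧ reachIn Adj m x y}

/-- Vertices of the exchange graph: the ground elements plus a source `src` and a sink `snk`. -/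
inductive XVert (V : Type*) where
  | elt : V → XVert V
  | src : XVert V
  | snk : XVert V

/-- The exchange graph `G(S)` of two matroids relative to a common independent set `S`. -/
def exchangeAdj {V : Type*} [DecidableEq V] [Fintype V]
    (M₁ M₂ : FinMatroid V) (S : Finset V) : XVert V → XVert V → Prop
  | XVert.elt a, XVert.elt b =>
      (a ∈ S ∧ b ∉ S ∧ M₁.Indep (insert b (S.erase a))) ∨
      (a ∉ S ∧ b ∈ S ∧ M₂.Indep (insert a (S.erase b)))
  | XVert.src, XVert.elt b => b ∉ S ∧ M₁.Indep (insert b S)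
  | XVert.elt a, XVert.snk => a ∉ S ∧ M₂.Indep (insert a S)
  | _, _ => False

section DD
variable {α : Type*} {Adj : α → α → Prop}


/-!
Let `T` be a maximum common independent set and fix `ℓ ≥ 1` with `ℓ + 1 < d(s, t)`, writing
`δ(v)` for the distance from `s` to `v` in `G(S)`. An element `v ∉ S` with `δ(v) ≤ ℓ` is dependent
on `S` in `M₂` (otherwise `v → t` closes a path shorter than `d(s, t)`), and all its `M₂`-exchange
partners `u ∈ S` satisfy `δ(u) ≤ ℓ + 1`; so the elements of `T` within distance `ℓ` are spanned in
`M₂` by `{u ∈ S : δ(u) ≤ ℓ + 1}`. Symmetrically, the elements of `T` beyond distance `ℓ` are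
spanned in `M₁` by `{u ∈ S : δ(u) ≥ ℓ}`. Counting gives `|T| ≤ |S| + |{u ∈ S : ℓ ≤ δ(u) ≤ ℓ + 1}|`.
Summing over `ℓ = 1, 3, …, 2m - 1`, whose windows are disjoint, yields `m |T| ≤ (m + 1) |S|`
with `m = ⌊(d - 1) / 2⌋`, whence `|S| ≥ (1 - 2 / d) r`.
-/

open Finset

section Distance
variable {α : Type*} {Adj : α → α → Prop} {x y z : α}

lemma reachIn_succ_of_adj {m : ℕ} (h : reachIn Adj m x y) (hyz : Adj y z) :
    reachIn Adj (m + 1) x z := by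
  induction m generalizing x with
  | zero => exact ⟨z, h ▸ hyz, rfl⟩
  | succ n ih =>
    obtain ⟨w, hxw, hwy⟩ := h
    exact ⟨w, hxw, ih hwy⟩

lemma ddist_le_of_reachIn {m : ℕ} (h : reachIn Adj m x y) : ddist Adj x y ≤ m :=
  sInf_le ⟨m, rfl, h⟩

lemma ddist_le_one_of_adj (h : Adj x y) : ddist Adj x y ≤ 1 :=
  ddist_le_of_reachIn (m := 1) ⟨y, h, rfl⟩

lemma exists_reachIn_of_ddist_ne_top (h : ddist Adj x y ≠ ⊤) :
    ∃ m : ℕ, reachIn Adj m x y ∧ ddist Adj x y = m := by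
  have hne : {n : ℕ∞ | ∃ m : ℕ, n = m ∧ reachIn Adj m x y}.Nonempty := by
    by_contra hempty
    rw [Set.not_nonempty_iff_eq_empty] at hempty
    exact h (by rw [ddist, hempty, sInf_empty])
  obtain ⟨m, hm, hreach⟩ := csInf_mem hne
  exact ⟨m, hreach, hm⟩

lemma ddist_le_ddist_add_one_of_adj (hyz : Adj y z) : ddist Adj x z ≤ ddist Adj x y + 1 := by
  rcases eq_or_ne (ddist Adj x y) ⊤ with htop | htop
  · simp [htop]
  obtain ⟨m, hreach, hm⟩ := exists_reachIn_of_ddist_ne_top htop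
  rw [hm]
  exact_mod_cast ddist_le_of_reachIn (reachIn_succ_of_adj hreach hyz)

end Distance

/- The `u` with `S - u + v` independent are the elements of the fundamental circuit of `v`
other than `v`, and a circuit spans each of its elements. -/
lemma Matroid.Indep.mem_closure_of_forall_exchange {α : Type*} {M : Matroid α} {S N : Set α}
    {v : α} (hS : M.Indep S) (hvS : v ∈ M.closure S)
    (hN : ∀ u ∈ S, M.Indep (insert v (S \ {u})) → u ∈ N) : v ∈ M.closure N := by
  by_cases hv : v ∈ S
  · have hvN : v ∈ N := hN v hv (by rwa [Set.insert_sdiff_singleton, Set.insert_eq_of_mem hv])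
    exact M.mem_closure_of_mem' hvN (M.mem_ground_of_mem_closure hvS)
  have hcircuit := hS.fundCircuit_isCircuit hvS hv
  refine M.closure_subset_closure ?_
    (hcircuit.mem_closure_sdiff_singleton_of_mem (M.mem_fundCircuit v S))
  rintro u ⟨hu, hne : u ≠ v⟩
  have huS : u ∈ S := (Set.mem_insert_iff.1 (M.fundCircuit_subset_insert v S hu)).resolve_left hne
  refine hN u huS ?_
  rw [Set.insert_sdiff_singleton_comm hne.symm]
  exact (hS.mem_fundCircuit_iff hvS hv).1 hu

namespace FinMatroid
variable {V : Type*} [DecidableEq V] [Fintype V] (M : FinMatroid V)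

def toMatroid : Matroid V :=
  (IndepMatroid.ofFinset Set.univ M.Indep M.indep_empty
    (fun _ _ hJ hIJ ↦ M.indep_subset hJ hIJ)
    (fun _ _ hI hJ hlt ↦ by
      obtain ⟨e, he, hind⟩ := M.indep_aug hJ hI hlt
      exact ⟨e, (Finset.mem_sdiff.1 he).1, (Finset.mem_sdiff.1 he).2, hind⟩)
    (fun _ _ ↦ Set.subset_univ _)).matroid

variable {M}

@[simp] lemma toMatroid_indep_coe {I : Finset V} : M.toMatroid.Indep I ↔ M.Indep I := by
  simp [toMatroid]

lemma card_le_card_of_subset_closure {I J : Finset V} (hI : M.Indep I) (hJ : M.Indep J)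
    (hIJ : ∀ v ∈ I, v ∈ M.toMatroid.closure J) : I.card ≤ J.card := by
  have h := (toMatroid_indep_coe.2 hI).encard_le_eRk_of_subset hIJ
  rw [Matroid.eRk_closure_eq, (toMatroid_indep_coe.2 hJ).eRk_eq_encard] at h
  simpa [Set.encard_coe_eq_coe_finsetCard] using h

lemma mem_closure_of_forall_exchange {S N : Finset V} {v : V} (hS : M.Indep S)
    (hvS : ¬ M.Indep (insert v S)) (hN : ∀ u ∈ S, M.Indep (insert v (S.erase u)) → u ∈ N) :
    v ∈ M.toMatroid.closure N := by
  have hS' := toMatroid_indep_coe.2 hS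
  refine hS'.mem_closure_of_forall_exchange ?_ fun u hu hind ↦ hN u hu ?_
  · rw [hS'.mem_closure_iff']
    exact ⟨Set.mem_univ v, fun h ↦ absurd (toMatroid_indep_coe.1 (by simpa using h)) hvS⟩
  · simpa [← toMatroid_indep_coe (M := M)] using hind

end FinMatroid

noncomputable def exchangeDist {V : Type*} [DecidableEq V] [Fintype V]
    (M₁ M₂ : FinMatroid V) (S : Finset V) (v : V) : ℕ∞ :=
  ddist (exchangeAdj M₁ M₂ S) XVert.src (XVert.elt v)

section ExchangeGraph
variable {V : Type*} [DecidableEq V] [Fintype V] {M₁ M₂ : FinMatroid V} {S : Finset V} {u v : V}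

lemma exchangeDist_le_one (hv : v ∉ S) (h : M₁.Indep (insert v S)) :
    exchangeDist M₁ M₂ S v ≤ 1 :=
  ddist_le_one_of_adj ⟨hv, h⟩

lemma exchangeDist_le_add_one_of_indep₁ (hu : u ∈ S) (hv : v ∉ S)
    (h : M₁.Indep (insert v (S.erase u))) :
    exchangeDist M₁ M₂ S v ≤ exchangeDist M₁ M₂ S u + 1 :=
  ddist_le_ddist_add_one_of_adj (Or.inl ⟨hu, hv, h⟩)

lemma exchangeDist_le_add_one_of_indep₂ (hu : u ∈ S) (hv : v ∉ S)
    (h : M₂.Indep (insert v (S.erase u))) :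
    exchangeDist M₁ M₂ S u ≤ exchangeDist M₁ M₂ S v + 1 :=
  ddist_le_ddist_add_one_of_adj (Or.inr ⟨hv, hu, h⟩)

lemma ddist_src_snk_le (hv : v ∉ S) (h : M₂.Indep (insert v S)) :
    ddist (exchangeAdj M₁ M₂ S) XVert.src XVert.snk ≤ exchangeDist M₁ M₂ S v + 1 :=
  ddist_le_ddist_add_one_of_adj ⟨hv, h⟩

lemma mem_closure_filter_exchangeDist_le (hS : M₂.Indep S) {ℓ : ℕ}
    (hℓ : (ℓ : ℕ∞) + 1 < ddist (exchangeAdj M₁ M₂ S) XVert.src XVert.snk)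
    (hv : exchangeDist M₁ M₂ S v ≤ ℓ) :
    v ∈ M₂.toMatroid.closure ↑(S.filter fun u ↦ exchangeDist M₁ M₂ S u ≤ ℓ + 1) := by
  by_cases hvS : v ∈ S
  · exact M₂.toMatroid.mem_closure_of_mem' (by simpa [hvS] using le_add_right hv) (Set.mem_univ v)
  refine FinMatroid.mem_closure_of_forall_exchange hS (fun hind ↦ ?_) fun u hu hind ↦ ?_
  · exact ((ddist_src_snk_le hvS hind).trans (add_le_add_left hv 1)).not_gt hℓ
  · simpa [hu] using (exchangeDist_le_add_one_of_indep₂ hu hvS hind).trans (add_le_add_left hv 1)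

lemma mem_closure_filter_le_exchangeDist (hS : M₁.Indep S) {ℓ : ℕ} (hℓ : 1 ≤ ℓ)
    (hv : ℓ < exchangeDist M₁ M₂ S v) :
    v ∈ M₁.toMatroid.closure ↑(S.filter fun u ↦ ℓ ≤ exchangeDist M₁ M₂ S u) := by
  by_cases hvS : v ∈ S
  · exact M₁.toMatroid.mem_closure_of_mem' (by simpa [hvS] using hv.le) (Set.mem_univ v)
  refine FinMatroid.mem_closure_of_forall_exchange hS (fun hind ↦ ?_) fun u hu hind ↦ ?_
  · exact (hv.trans_le (exchangeDist_le_one hvS hind)).not_ge (by exact_mod_cast hℓ)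
  · have hlt := hv.trans_le (exchangeDist_le_add_one_of_indep₁ hu hvS hind)
    simpa [hu] using (ENat.lt_add_one_iff' (ENat.natCast_ne_top ℓ)).1 hlt

end ExchangeGraph

section Counting
variable {V : Type*} [DecidableEq V] [Fintype V] {M₁ M₂ : FinMatroid V} {S T : Finset V}

lemma card_le_card_add_card_filter_exchangeDist (hS₁ : M₁.Indep S) (hS₂ : M₂.Indep S)
    (hT₁ : M₁.Indep T) (hT₂ : M₂.Indep T) {ℓ : ℕ} (hℓ : 1 ≤ ℓ)
    (hℓt : (ℓ : ℕ∞) + 1 < ddist (exchangeAdj M₁ M₂ S) XVert.src XVert.snk) :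
    T.card ≤ S.card +
      (S.filter fun u ↦ ℓ ≤ exchangeDist M₁ M₂ S u ∧ exchangeDist M₁ M₂ S u ≤ ℓ + 1).card := by
  set far := S.filter fun u ↦ ℓ ≤ exchangeDist M₁ M₂ S u
  set near := S.filter fun u ↦ exchangeDist M₁ M₂ S u ≤ ℓ + 1
  have hnear : (T.filter fun v ↦ exchangeDist M₁ M₂ S v ≤ ℓ).card ≤ near.card :=
    M₂.card_le_card_of_subset_closure (M₂.indep_subset hT₂ (filter_subset _ _))
      (M₂.indep_subset hS₂ (filter_subset _ _))
      fun _ hv ↦ mem_closure_filter_exchangeDist_le hS₂ hℓt (mem_filter.1 hv).2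
  have hfar : (T.filter fun v ↦ ¬ exchangeDist M₁ M₂ S v ≤ ℓ).card ≤ far.card :=
    M₁.card_le_card_of_subset_closure (M₁.indep_subset hT₁ (filter_subset _ _))
      (M₁.indep_subset hS₁ (filter_subset _ _))
      fun _ hv ↦ mem_closure_filter_le_exchangeDist hS₁ hℓ (not_le.1 (mem_filter.1 hv).2)
  calc T.card = (T.filter fun v ↦ exchangeDist M₁ M₂ S v ≤ ℓ).card
        + (T.filter fun v ↦ ¬ exchangeDist M₁ M₂ S v ≤ ℓ).card :=
        (card_filter_add_card_filter_not _).symm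
    _ ≤ far.card + near.card := by rw [add_comm]; exact add_le_add hfar hnear
    _ = (far ∪ near).card + (far ∩ near).card := (card_union_add_card_inter _ _).symm
    _ ≤ S.card + (far ∩ near).card :=
        add_le_add_left (card_le_card (union_subset (filter_subset _ _) (filter_subset _ _))) _
    _ = _ := by rw [filter_and]

lemma mul_card_le_succ_mul_card (hS₁ : M₁.Indep S) (hS₂ : M₂.Indep S)
    (hT₁ : M₁.Indep T) (hT₂ : M₂.Indep T) {m : ℕ}
    (hm : 2 * (m : ℕ∞) < ddist (exchangeAdj M₁ M₂ S) XVert.src XVert.snk) :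
    m * T.card ≤ (m + 1) * S.card := by
  set window := fun i : ℕ ↦ S.filter fun u ↦
    ((2 * i + 1 : ℕ) : ℕ∞) ≤ exchangeDist M₁ M₂ S u ∧
      exchangeDist M₁ M₂ S u ≤ ((2 * i + 1 : ℕ) : ℕ∞) + 1
  have hdisj : (range m : Set ℕ).PairwiseDisjoint window := by
    intro i _ j _ hij
    refine disjoint_filter.2 fun u _ hi hj ↦ hij ?_
    have hij' : 2 * i + 1 ≤ 2 * j + 1 + 1 := by exact_mod_cast hi.1.trans hj.2
    have hji' : 2 * j + 1 ≤ 2 * i + 1 + 1 := by exact_mod_cast hj.1.trans hi.2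
    omega
  have hwindow : ∀ i ∈ range m, T.card ≤ S.card + (window i).card := fun i hi ↦
    card_le_card_add_card_filter_exchangeDist hS₁ hS₂ hT₁ hT₂ (by omega)
      (lt_of_le_of_lt
        (by exact_mod_cast (by have := mem_range.1 hi; omega : 2 * i + 1 + 1 ≤ 2 * m)) hm)
  calc m * T.card = ∑ _i ∈ range m, T.card := by simp
    _ ≤ ∑ i ∈ range m, (S.card + (window i).card) := sum_le_sum hwindow
    _ = m * S.card + ((range m).biUnion window).card := by
        rw [sum_add_distrib, card_biUnion hdisj]; simp
    _ ≤ m * S.card + S.card :=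
        add_le_add_right (card_le_card (biUnion_subset.2 fun _ _ ↦ filter_subset _ _)) _
    _ = (m + 1) * S.card := by ring

end Counting

/-- There is a universal constant `c > 0` such that: if every `(s,t)`-path of the exchange
graph `G(S)` has length at least `d`, then `|S| ≥ (1 − c/d) · r`, where `r` is the maximum
size of a common independent set. -/
theorem distance_implies_large_common_independent_set :
    ∃ c : ℝ, 0 < c ∧
      ∀ (V : Type) [DecidableEq V] [Fintype V]
        (M₁ M₂ : FinMatroid V) (S : Finset V),
        M₁.Indep S → M₂.Indep S →
        ∀ d : ℕ, 0 < d →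
        (d : ℕ∞) ≤ ddist (exchangeAdj M₁ M₂ S) XVert.src XVert.snk →
        (1 - c / (d : ℝ)) *
            ((sSup {n : ℕ | ∃ T : Finset V, M₁.Indep T ∧ M₂.Indep T ∧ T.card = n} : ℕ) : ℝ)
          ≤ (S.card : ℝ) := by
  refine ⟨2, two_pos, fun V _ _ M₁ M₂ S hS₁ hS₂ d hd hdist ↦ ?_⟩
  obtain ⟨T, hT₁, hT₂, hT⟩ :=
    Nat.sSup_mem (s := {n : ℕ | ∃ T : Finset V, M₁.Indep T ∧ M₂.Indep T ∧ T.card = n})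
      ⟨0, ∅, M₁.indep_empty, M₂.indep_empty, rfl⟩
      ⟨Fintype.card V, by rintro _ ⟨T, -, -, rfl⟩; exact T.card_le_univ⟩
  rw [← hT]
  set m := (d - 1) / 2
  have hm : (m : ℝ) * T.card ≤ (m + 1) * S.card := by
    exact_mod_cast mul_card_le_succ_mul_card hS₁ hS₂ hT₁ hT₂
      (lt_of_lt_of_le (by exact_mod_cast (by omega : 2 * m < d)) hdist)
  have hd' : (1 : ℝ) ≤ 2 * (m + 1) / d :=
    (le_div_iff₀ (by exact_mod_cast hd)).2 <| by
      rw [one_mul]; exact_mod_cast (by omega : d ≤ 2 * (m + 1))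
  refine le_of_mul_le_mul_right ?_ (by positivity : (0 : ℝ) < m + 1)
  calc (1 - 2 / (d : ℝ)) * T.card * (m + 1) = (m + 1 - 2 * (m + 1) / d) * T.card := by ring
    _ ≤ m * T.card := by gcongr; linarith
    _ ≤ S.card * (m + 1) := by linarith
end DD
end

section
/- Let M_1 = (V, I_1), …, M_k = (V, I_k) be k matroids over a common finite ground set V, and let Ĩ be the family of partitionable subsets of V. Then (V, Ĩ) is a matroid; that is: ∅ ∈ Ĩ; if S ∈ Ĩ and S' ⊆ S then S' ∈ Ĩ; and if S, S' ∈ Ĩ with |S'| < |S|, then there exists x ∈ S \ S' such that S' ∪ {x} ∈ Ĩ. -/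
/-- `S` is partitionable w.r.t. the matroids `M i`: it can be partitioned into
sets `P i` with `P i` independent in `M i`. -/
def Partitionable {V ι : Type*} [DecidableEq V] [Fintype V] [DecidableEq ι] [Fintype ι]
    (M : ι → FinMatroid V) (S : Finset V) : Prop :=
  ∃ P : ι → Finset V, (∀ i, (M i).Indep (P i)) ∧
    (∀ i j, i ≠ j → Disjoint (P i) (P j)) ∧ Finset.univ.biUnion P = S

/-- Nash-Williams: the family of partitionable sets is the family of independent sets
of a matroid (the union of the matroids `M i`). -/
theorem matroid_union_is_matroid {V ι : Type*} [DecidableEq V] [Fintype V]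
    [DecidableEq ι] [Fintype ι] (M : ι → FinMatroid V) :
    Partitionable M ∅ ∧
    (∀ S S' : Finset V, Partitionable M S → S' ⊆ S → Partitionable M S') ∧
    (∀ S S' : Finset V, Partitionable M S → Partitionable M S' → S'.card < S.card →
      ∃ x ∈ S \ S', Partitionable M (insert x S')) := by
  classical
  refine ⟨⟨fun _ => ∅, fun i => (M i).indep_empty, fun i j _ => Finset.disjoint_empty_left _,
      by ext v; simp⟩, ?_, ?_⟩
  · rintro S S' ⟨P, hind, hdisj, hunion⟩ hsub
    refine ⟨fun i => P i ∩ S', fun i => (M i).indep_subset (hind i) Finset.inter_subset_left,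
      fun i j hij => (hdisj i j hij).mono Finset.inter_subset_left Finset.inter_subset_left, ?_⟩
    ext v
    simp only [Finset.mem_biUnion, Finset.mem_inter, Finset.mem_univ, true_and]
    constructor
    · rintro ⟨i, _, hv⟩; exact hv
    · intro hv
      have hvS : v ∈ S := hsub hv
      rw [← hunion] at hvS
      obtain ⟨i, _, hvi⟩ := Finset.mem_biUnion.mp hvS
      exact ⟨i, hvi, hv⟩
  · rintro S S' hS hS' hcard
    set good : (ι → Finset V) × (ι → Finset V) → Prop := fun PQ =>
      (∀ i, (M i).Indep (PQ.1 i)) ∧ (∀ i j, i ≠ j → Disjoint (PQ.1 i) (PQ.1 j)) ∧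
        Finset.univ.biUnion PQ.1 = S ∧
      (∀ i, (M i).Indep (PQ.2 i)) ∧ (∀ i j, i ≠ j → Disjoint (PQ.2 i) (PQ.2 j)) ∧
        Finset.univ.biUnion PQ.2 = S' with hgood
    obtain ⟨P0, hP0i, hP0d, hP0u⟩ := hS
    obtain ⟨Q0, hQ0i, hQ0d, hQ0u⟩ := hS'
    have hne : (Finset.univ.filter good).Nonempty :=
      ⟨(P0, Q0), Finset.mem_filter.mpr ⟨Finset.mem_univ _, hP0i, hP0d, hP0u, hQ0i, hQ0d, hQ0u⟩⟩
    obtain ⟨⟨P, Q⟩, hmem, hmax⟩ :=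
      Finset.exists_max_image (Finset.univ.filter good)
        (fun PQ => ∑ i, ((PQ.1 i) ∩ (PQ.2 i)).card) hne
    obtain ⟨hPi, hPd, hPu, hQi, hQd, hQu⟩ := (Finset.mem_filter.mp hmem).2
    have hsumP : ∑ i, (P i).card = S.card := by
      rw [← hPu, Finset.card_biUnion (fun a _ b _ h => hPd a b h)]
    have hsumQ : ∑ i, (Q i).card = S'.card := by
      rw [← hQu, Finset.card_biUnion (fun a _ b _ h => hQd a b h)]
    have hex : ∃ i, (Q i).card < (P i).card := by
      by_contra h
      push_neg at h
      have : ∑ i, (P i).card ≤ ∑ i, (Q i).card := Finset.sum_le_sum fun i _ => h i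
      omega
    obtain ⟨i, hi⟩ := hex
    obtain ⟨x, hx, hxQi⟩ := (M i).indep_aug (hPi i) (hQi i) hi
    rw [Finset.mem_sdiff] at hx
    by_cases hxS' : x ∈ S'
    · exfalso
      obtain ⟨j, _, hxj⟩ := Finset.mem_biUnion.mp (show x ∈ Finset.univ.biUnion Q by
        rw [hQu]; exact hxS')
      have hji : j ≠ i := fun h => hx.2 (h ▸ hxj)
      have hxPj : x ∉ P j := fun h => Finset.disjoint_left.mp (hPd i j (Ne.symm hji)) hx.1 h
      have hxQ : ∀ a, a ≠ j → x ∉ Q a := fun a ha h =>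
        Finset.disjoint_left.mp (hQd a j ha) h hxj
      set Q' : ι → Finset V := fun a =>
        if a = i then insert x (Q i) else if a = j then (Q j).erase x else Q a with hQ'
      have hmemQ' : ∀ v a, v ∈ Q' a ↔ ((v = x ∧ a = i) ∨ (v ∈ Q a ∧ v ≠ x)) := by
        intro v a
        simp only [hQ']
        split_ifs with h1 h2
        · subst h1
          simp only [Finset.mem_insert]
          constructor
          · rintro (rfl | hv)
            · exact Or.inl ⟨rfl, by trivial⟩
            · by_cases hvx : v = x
              · exact Or.inl ⟨hvx, by trivial⟩
              · exact Or.inr ⟨hv, hvx⟩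
          · rintro (⟨rfl, _⟩ | ⟨hv, _⟩)
            · exact Or.inl rfl
            · exact Or.inr hv
        · subst h2
          simp only [Finset.mem_erase]
          constructor
          · rintro ⟨hvx, hv⟩; exact Or.inr ⟨hv, hvx⟩
          · rintro (⟨rfl, h⟩ | ⟨hv, hvx⟩)
            · exact absurd h h1
            · exact ⟨hvx, hv⟩
        · constructor
          · intro hv
            refine Or.inr ⟨hv, ?_⟩
            rintro rfl
            exact hxQ a h2 hv
          · rintro (⟨rfl, h⟩ | ⟨hv, _⟩)
            · exact absurd h h1
            · exact hv
      have hQ'i : ∀ a, (M a).Indep (Q' a) := by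
        intro a
        simp only [hQ']
        split_ifs with h1 h2
        · rw [h1]; exact hxQi
        · rw [h2]; exact (M j).indep_subset (hQi j) (Finset.erase_subset _ _)
        · exact hQi a
      have hQ'd : ∀ a b, a ≠ b → Disjoint (Q' a) (Q' b) := by
        intro a b hab
        rw [Finset.disjoint_left]
        intro v hva hvb
        rcases (hmemQ' v a).mp hva with ⟨rfl, rfl⟩ | ⟨hva', hvx⟩
        · rcases (hmemQ' v b).mp hvb with ⟨_, rfl⟩ | ⟨hvb', hvx⟩
          · exact hab rfl
          · exact hvx rfl
        · rcases (hmemQ' v b).mp hvb with ⟨rfl, rfl⟩ | ⟨hvb', _⟩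
          · exact hvx rfl
          · exact Finset.disjoint_left.mp (hQd a b hab) hva' hvb'
      have hQ'u : Finset.univ.biUnion Q' = S' := by
        ext v
        simp only [Finset.mem_biUnion, Finset.mem_univ, true_and]
        constructor
        · rintro ⟨a, hva⟩
          rcases (hmemQ' v a).mp hva with ⟨rfl, _⟩ | ⟨hva', _⟩
          · exact hxS'
          · rw [← hQu]
            exact Finset.mem_biUnion.mpr ⟨a, Finset.mem_univ a, hva'⟩
        · intro hv
          by_cases hvx : v = x
          · exact ⟨i, (hmemQ' v i).mpr (Or.inl ⟨hvx, rfl⟩)⟩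
          · rw [← hQu] at hv
            obtain ⟨a, _, hva⟩ := Finset.mem_biUnion.mp hv
            exact ⟨a, (hmemQ' v a).mpr (Or.inr ⟨hva, hvx⟩)⟩
      have hsub' : ∀ a, P a ∩ Q a ⊆ P a ∩ Q' a := by
        intro a v hv
        rw [Finset.mem_inter] at hv ⊢
        refine ⟨hv.1, (hmemQ' v a).mpr ?_⟩
        by_cases hvx : v = x
        · subst hvx
          have haj : a = j := by
            by_contra h
            exact hxQ a h hv.2
          exact absurd hv.1 (haj ▸ hxPj)
        · exact Or.inr ⟨hv.2, hvx⟩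
      have hlt : ∑ a, (P a ∩ Q a).card < ∑ a, (P a ∩ Q' a).card := by
        refine Finset.sum_lt_sum (fun a _ => Finset.card_le_card (hsub' a)) ⟨i, Finset.mem_univ i, ?_⟩
        refine Finset.card_lt_card ((Finset.ssubset_iff_of_subset (hsub' i)).mpr ⟨x, ?_, ?_⟩)
        · exact Finset.mem_inter.mpr ⟨hx.1, (hmemQ' x i).mpr (Or.inl ⟨rfl, rfl⟩)⟩
        · intro h
          exact hx.2 (Finset.mem_inter.mp h).2
      have hle := hmax (P, Q')
        (Finset.mem_filter.mpr ⟨Finset.mem_univ _, hPi, hPd, hPu, hQ'i, hQ'd, hQ'u⟩)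
      simp only at hle
      omega
    · refine ⟨x, Finset.mem_sdiff.mpr ⟨?_, hxS'⟩, ?_⟩
      · rw [← hPu]
        exact Finset.mem_biUnion.mpr ⟨i, Finset.mem_univ i, hx.1⟩
      · have hxQ : ∀ a, x ∉ Q a := fun a h => hxS' (by
          rw [← hQu]; exact Finset.mem_biUnion.mpr ⟨a, Finset.mem_univ a, h⟩)
        set R : ι → Finset V := fun a => if a = i then insert x (Q i) else Q a with hR
        have hmemR : ∀ v a, v ∈ R a ↔ ((v = x ∧ a = i) ∨ v ∈ Q a) := by
          intro v a
          by_cases h : a = i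
          · rw [hR]
            show v ∈ (if a = i then insert x (Q i) else Q a) ↔ _
            rw [if_pos h, h, Finset.mem_insert]
            constructor
            · rintro (rfl | hv)
              · exact Or.inl ⟨rfl, rfl⟩
              · exact Or.inr hv
            · rintro (⟨rfl, _⟩ | hv)
              · exact Or.inl rfl
              · exact Or.inr hv
          · rw [hR]
            show v ∈ (if a = i then insert x (Q i) else Q a) ↔ _
            rw [if_neg h]
            constructor
            · exact Or.inr
            · rintro (⟨rfl, h'⟩ | hv)
              · exact absurd h' h
              · exact hv
        refine ⟨R, ?_, ?_, ?_⟩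
        · intro a
          by_cases h : a = i
          · rw [hR]
            show (M a).Indep (if a = i then insert x (Q i) else Q a)
            rw [if_pos h, h]
            exact hxQi
          · rw [hR]
            show (M a).Indep (if a = i then insert x (Q i) else Q a)
            rw [if_neg h]
            exact hQi a
        · intro a b hab
          rw [Finset.disjoint_left]
          intro v hva hvb
          rcases (hmemR v a).mp hva with ⟨rfl, rfl⟩ | hva'
          · rcases (hmemR v b).mp hvb with ⟨_, h⟩ | hvb'
            · exact hab h.symm
            · exact hxQ b hvb'
          · rcases (hmemR v b).mp hvb with ⟨rfl, _⟩ | hvb'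
            · exact hxQ a hva'
            · exact Finset.disjoint_left.mp (hQd a b hab) hva' hvb'
        · ext v
          simp only [Finset.mem_biUnion, Finset.mem_univ, true_and, Finset.mem_insert]
          constructor
          · rintro ⟨a, hva⟩
            rcases (hmemR v a).mp hva with ⟨rfl, _⟩ | hva'
            · exact Or.inl rfl
            · exact Or.inr (by rw [← hQu]; exact Finset.mem_biUnion.mpr ⟨a, Finset.mem_univ a, hva'⟩)
          · rintro (rfl | hv)
            · exact ⟨i, (hmemR v i).mpr (Or.inl ⟨rfl, rfl⟩)⟩
            · rw [← hQu] at hv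
              obtain ⟨a, _, hva⟩ := Finset.mem_biUnion.mp hv
              exact ⟨a, (hmemR v a).mpr (Or.inr hva)⟩
end

section
/- Let M_1 = (V, I_1), …, M_k = (V, I_k) be k matroids over a common finite ground set V and let (S_1, …, S_k) be a partition of S ⊆ V such that S_i ∈ I_i for all i ∈ [k]. Then there exists a partitionable set S' with |S'| ≥ |S| + 1 if and only if some vertex t_j ∈ T is reachable from s by a directed path in the compressed exchange graph G(S_1, …, S_k). -/
/-- Vertices of the compressed exchange graph: ground elements, a source `src`,
and one sink `snk i` for each index `i`. -/
inductive CVert (V ι : Type*) where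
  | elt : V → CVert V ι
  | src : CVert V ι
  | snk : ι → CVert V ι

/-- The compressed exchange graph `G(S₁, …, S_k)` relative to the partition `P`. -/
def compAdj {V ι : Type*} [DecidableEq V] [Fintype V] [DecidableEq ι] [Fintype ι]
    (M : ι → FinMatroid V) (P : ι → Finset V) : CVert V ι → CVert V ι → Prop
  | CVert.elt v, CVert.elt u =>
      ∃ i, u ∈ P i ∧ ¬ (M i).Indep (insert v (P i)) ∧
        (M i).Indep (insert v ((P i).erase u))
  | CVert.src, CVert.elt v => v ∉ Finset.univ.biUnion P
  | CVert.elt v, CVert.snk i => v ∉ P i ∧ (M i).Indep (insert v (P i))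
  | _, _ => False

/-! If no sink is reachable, let `R` be the set of reachable elements. It contains every
element outside `S`, and `S_i ∩ R` is a maximal independent subset of `R` in `M_i`: an
element of `R` extending it would either extend `S_i` (an edge to `t_i`) or have its
fundamental circuit meet an unreachable element of `S_i` (an edge to that element). So a
partitionable `S'` has `|S' ∩ R| ≤ ∑ |S_i ∩ R| = |S ∩ R|` and `S' \ R ⊆ S \ R`.

Conversely, a shortest path `s → v_0 → ⋯ → v_n → t_j` has no shortcuts. Moving `v_n` from
its part `S_i` into `S_j` keeps every part independent, and `s → v_0 → ⋯ → v_{n-1} → t_i`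
is a shortcut-free path of the new graph: the fundamental circuits of `v_0, …, v_{n-1}`
avoid `v_n`, so their edges do not change. By induction on `n`, `S + v_0` is partitionable. -/

open Finset Relation CVert

namespace FinMatroid

variable {V : Type*} [DecidableEq V] [Fintype V] {M : FinMatroid V} {I J K R A : Finset V}
  {x y w : V}

lemma exists_indep_augment (hK : M.Indep K) (hI : M.Indep I) :
    ∃ B, K ⊆ B ∧ B ⊆ K ∪ I ∧ M.Indep B ∧ I.card ≤ B.card := by
  classical
  have hne : ((K ∪ I).powerset.filter fun B => K ⊆ B ∧ M.Indep B).Nonempty :=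
    ⟨K, mem_filter.2 ⟨mem_powerset.2 subset_union_left, subset_rfl, hK⟩⟩
  obtain ⟨B, hB, hmax⟩ := exists_max_image _ card hne
  simp only [mem_filter, mem_powerset] at hB hmax
  obtain ⟨hBsub, hKB, hBind⟩ := hB
  refine ⟨B, hKB, hBsub, hBind, not_lt.1 fun hlt => ?_⟩
  obtain ⟨z, hz, hzB⟩ := M.indep_aug hI hBind hlt
  obtain ⟨hzI, hzB'⟩ := mem_sdiff.1 hz
  have := hmax (insert z B)
    ⟨insert_subset (mem_union_right _ hzI) hBsub, hKB.trans (subset_insert _ _), hzB⟩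
  rw [card_insert_of_notMem hzB'] at this
  omega

/-- Augmenting an independent `insert x J` from `I` would give an independent
`insert x (I.erase u)` with `u ∈ I \ J`. -/
lemma not_indep_insert_of_forall_erase (hI : M.Indep I) (hJI : J ⊆ I)
    (hx : ¬ M.Indep (insert x I)) (h : ∀ u ∈ I \ J, ¬ M.Indep (insert x (I.erase u))) :
    ¬ M.Indep (insert x J) := by
  intro hJ
  have hxI : x ∉ I := fun hxI => hx (by rwa [insert_eq_of_mem hxI])
  obtain ⟨B, hJB, hBsub, hB, hcard⟩ := exists_indep_augment hJ hI
  have hBI : B ⊆ insert x I :=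
    hBsub.trans (union_subset (insert_subset_insert _ hJI) (subset_insert _ _))
  obtain ⟨u, hu, huB⟩ := not_subset.1 fun h => hx (by rwa [hBI.antisymm h] at hB)
  have hux : u ≠ x := fun hux => huB (hux ▸ hJB (mem_insert_self _ _))
  have huI : u ∈ I := (mem_insert.1 hu).resolve_left hux
  have huJ : u ∉ J := fun huJ => huB (hJB (mem_insert_of_mem huJ))
  have hBeq : B = insert x (I.erase u) := by
    refine eq_of_subset_of_card_le (fun b hb => ?_) ?_
    · rw [← erase_insert_of_ne hux.symm]
      exact mem_erase.2 ⟨fun hbu => huB (hbu ▸ hb), hBI hb⟩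
    · rw [card_insert_of_notMem fun h => hxI (mem_of_mem_erase h), card_erase_of_mem huI,
        Nat.sub_add_cancel (card_pos.2 ⟨u, huI⟩)]
      exact hcard
  exact h u (mem_sdiff.2 ⟨huI, huJ⟩) (hBeq ▸ hB)

lemma card_le_of_forall_not_indep_insert (hJ : M.Indep J)
    (hmax : ∀ v ∈ R \ J, ¬ M.Indep (insert v J)) (hA : M.Indep A) (hAR : A ⊆ R) :
    A.card ≤ J.card := by
  by_contra! hlt
  obtain ⟨v, hv, hvJ⟩ := M.indep_aug hA hJ hlt
  obtain ⟨hvA, hv'⟩ := mem_sdiff.1 hv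
  exact hmax v (mem_sdiff.2 ⟨hAR hvA, hv'⟩) hvJ

variable (M) in
/-- `y` can be exchanged for `x` in `I`: the edge `x → y` of the exchange graph of `M` at `I`. -/
def IsExchange (I : Finset V) (x y : V) : Prop :=
  y ∈ I ∧ ¬ M.Indep (insert x I) ∧ M.Indep (insert x (I.erase y))

variable (M) in
/-- The edge from `x` to the sink of `M` at `I`. -/
def Augments (I : Finset V) (x : V) : Prop :=
  x ∉ I ∧ M.Indep (insert x I)

lemma isExchange_erase_iff (hI : M.Indep I) (hx : ¬ M.Augments I x)
    (hxw : ¬ M.IsExchange I x w) (hyw : y ≠ w) :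
    M.IsExchange (I.erase w) x y ↔ M.IsExchange I x y := by
  by_cases hxI : x ∈ I
  · have h₁ : M.Indep (insert x (I.erase w)) :=
      M.indep_subset hI (insert_subset hxI (erase_subset _ _))
    simp only [IsExchange, insert_eq_of_mem hxI, h₁, hI, not_true_eq_false, false_and,
      and_false]
  have hdep : ¬ M.Indep (insert x I) := fun h => hx ⟨hxI, h⟩
  have hdep_w : ¬ M.Indep (insert x (I.erase w)) := by
    by_cases hwI : w ∈ I
    · exact fun h => hxw ⟨hwI, hdep, h⟩
    · rwa [erase_eq_of_notMem hwI]
  simp only [IsExchange, mem_erase, hyw, ne_eq, not_false_eq_true, true_and, hdep, hdep_w]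
  refine and_congr_right fun hyI => ⟨fun h => by_contra fun hy => ?_, fun h => ?_⟩
  · refine not_indep_insert_of_forall_erase hI ((erase_subset _ _).trans (erase_subset _ _))
      hdep (fun u hu => ?_) h
    obtain ⟨huI, hu'⟩ := mem_sdiff.1 hu
    obtain rfl | rfl : u = y ∨ u = w := by simp only [mem_erase] at hu'; tauto
    · exact hy
    · exact hdep_w
  · exact M.indep_subset h (insert_subset_insert _ (erase_subset_erase _ (erase_subset _ _)))

lemma isExchange_insert_iff (hI : M.Indep (insert w I)) (hwI : w ∉ I)
    (hx : ¬ M.Augments I x) (hyw : y ≠ w) :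
    M.IsExchange (insert w I) x y ↔ M.IsExchange I x y := by
  by_cases hxI : x ∈ I
  · simp only [IsExchange, insert_eq_of_mem (mem_insert_of_mem hxI), insert_eq_of_mem hxI, hI,
      M.indep_subset hI (subset_insert _ _), not_true_eq_false, false_and, and_false]
  have hdep : ¬ M.Indep (insert x I) := fun h => hx ⟨hxI, h⟩
  have hdep_w : ¬ M.Indep (insert x (insert w I)) :=
    fun h => hdep (M.indep_subset h (insert_subset_insert _ (subset_insert _ _)))
  simp only [IsExchange, mem_insert, hyw, false_or, hdep, hdep_w, not_false_eq_true, true_and]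
  refine and_congr_right fun hyI => ⟨fun h => ?_, fun h => by_contra fun hy => ?_⟩
  · exact M.indep_subset h (insert_subset_insert _ (erase_subset_erase _ (subset_insert _ _)))
  · refine not_indep_insert_of_forall_erase hI
      ((erase_subset _ _).trans (subset_insert _ _)) hdep_w (fun u hu => ?_) h
    obtain ⟨huI, hu'⟩ := mem_sdiff.1 hu
    obtain rfl | rfl : u = w ∨ u = y := by simp only [mem_insert, mem_erase] at huI hu'; tauto
    · rwa [erase_insert hwI]
    · exact hy

lemma not_augments_erase (hx : ¬ M.Augments I x) (hxw : ¬ M.IsExchange I x w)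
    (hne : x ≠ w) : ¬ M.Augments (I.erase w) x := by
  rintro ⟨hxI, hind⟩
  have hxI : x ∉ I := fun h => hxI (mem_erase.2 ⟨hne, h⟩)
  have hdep : ¬ M.Indep (insert x I) := fun h => hx ⟨hxI, h⟩
  by_cases hwI : w ∈ I
  · exact hxw ⟨hwI, hdep, hind⟩
  · exact hdep (by rwa [erase_eq_of_notMem hwI] at hind)

lemma not_augments_insert (hx : ¬ M.Augments I x) : ¬ M.Augments (insert w I) x :=
  fun ⟨hxI, hind⟩ =>
  hx ⟨fun h => hxI (mem_insert_of_mem h),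
    M.indep_subset hind (insert_subset_insert _ (subset_insert _ _))⟩

end FinMatroid

lemma Finset.card_biUnion_le_of_card_inter_le {V ι : Type*} [DecidableEq V] [Fintype ι]
    {P Q : ι → Finset V} {R : Finset V} (hdisj : ∀ k l, k ≠ l → Disjoint (P k) (P l))
    (hR : ∀ v ∉ univ.biUnion P, v ∈ R) (hle : ∀ k, (Q k ∩ R).card ≤ (P k ∩ R).card) :
    (univ.biUnion Q).card ≤ (univ.biUnion P).card := by
  have hQR : (univ.biUnion Q ∩ R).card ≤ ∑ k, (Q k ∩ R).card := by
    rw [biUnion_inter]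
    exact card_biUnion_le
  have hPR : (univ.biUnion P ∩ R).card = ∑ k, (P k ∩ R).card := by
    rw [biUnion_inter, card_biUnion]
    exact fun k _ l _ hkl => (hdisj k l hkl).mono inter_subset_left inter_subset_left
  have hout : (univ.biUnion Q \ R).card ≤ (univ.biUnion P \ R).card :=
    card_le_card fun v hv => by
      obtain ⟨-, hvR⟩ := mem_sdiff.1 hv
      exact mem_sdiff.2 ⟨by_contra fun h => hvR (hR v h), hvR⟩
  have := card_inter_add_card_sdiff (univ.biUnion Q) R
  have := card_inter_add_card_sdiff (univ.biUnion P) R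
  have := sum_le_sum fun k (_ : k ∈ univ) => hle k
  omega

section moveTo

variable {V ι : Type*} [DecidableEq V] [DecidableEq ι] {P : ι → Finset V} {w : V} {j : ι}

def moveTo (P : ι → Finset V) (w : V) (j : ι) : ι → Finset V :=
  fun k => if k = j then insert w (P k) else (P k).erase w

lemma biUnion_moveTo [Fintype ι] : univ.biUnion (moveTo P w j) = insert w (univ.biUnion P) := by
  ext u
  by_cases huw : u = w
  · subst huw
    simpa using ⟨j, by simp [moveTo]⟩
  · simp only [mem_biUnion, mem_univ, true_and, mem_insert, huw, false_or]
    refine exists_congr fun k => ?_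
    unfold moveTo
    split_ifs <;> simp [huw]

lemma indep_moveTo [Fintype V] {M : ι → FinMatroid V} (hind : ∀ k, (M k).Indep (P k)) (hw : (M j).Indep (insert w (P j)))
    (k : ι) : (M k).Indep (moveTo P w j k) := by
  unfold moveTo
  split_ifs with hk
  · exact hk ▸ hw
  · exact (M k).indep_subset (hind k) (erase_subset _ _)

lemma disjoint_moveTo (hdisj : ∀ k l, k ≠ l → Disjoint (P k) (P l)) (k l : ι) (hkl : k ≠ l) :
    Disjoint (moveTo P w j k) (moveTo P w j l) := by
  rw [disjoint_left]
  intro u hk hl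
  unfold moveTo at hk hl
  split_ifs at hk hl with h₁ h₂ h₂
  · exact hkl (h₁.trans h₂.symm)
  · obtain rfl | hu := mem_insert.1 hk
    · exact (notMem_erase _ _) hl
    · exact disjoint_left.1 (hdisj k l hkl) hu (mem_of_mem_erase hl)
  · obtain rfl | hu := mem_insert.1 hl
    · exact (notMem_erase _ _) hk
    · exact disjoint_left.1 (hdisj k l hkl) (mem_of_mem_erase hk) hu
  · exact disjoint_left.1 (hdisj k l hkl) (mem_of_mem_erase hk) (mem_of_mem_erase hl)

end moveTo

section ExchangeGraph

variable {V ι : Type*} [DecidableEq V] [Fintype V] [DecidableEq ι] [Fintype ι]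
  {M : ι → FinMatroid V} {P : ι → Finset V} {x y w : V} {j : ι}

@[simp] lemma compAdj_elt_elt :
    compAdj M P (elt x) (elt y) ↔ ∃ k, (M k).IsExchange (P k) x y := Iff.rfl

@[simp] lemma compAdj_elt_snk :
    compAdj M P (elt x) (snk j) ↔ (M j).Augments (P j) x := Iff.rfl

lemma not_compAdj_snk_left {c : CVert V ι} : ¬ compAdj M P (snk j) c := by
  cases c <;> exact id

lemma exists_walk_of_reflTransGen_elt (h : ReflTransGen (compAdj M P) src (elt x)) :
    ∃ (v : ℕ → V) (n : ℕ), v 0 ∉ univ.biUnion P ∧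
      (∀ a < n, compAdj M P (elt (v a)) (elt (v (a + 1)))) ∧ v n = x := by
  generalize hc : (elt x : CVert V ι) = c at h
  induction h generalizing x with
  | refl => cases hc
  | @tail b _ _ hbc ih =>
    subst hc
    cases b with
    | src => exact ⟨fun _ => x, 0, hbc, by simp, rfl⟩
    | elt y =>
      obtain ⟨v, n, h0, hstep, rfl⟩ := ih rfl
      refine ⟨fun a => if a ≤ n then v a else x, n + 1, by simpa using h0, fun a ha => ?_,
        by simp⟩
      by_cases han : a + 1 ≤ n
      · simpa [han, (by omega : a ≤ n)] using hstep a han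
      · simpa [(by omega : a = n)] using hbc
    | snk k => exact (not_compAdj_snk_left hbc).elim

variable (M P) in
/-- The walk `s → v 0 → ⋯ → v n → t j` in the compressed exchange graph. -/
structure IsAugmentingWalk (v : ℕ → V) (n : ℕ) (j : ι) : Prop where
  source : v 0 ∉ univ.biUnion P
  step : ∀ a < n, compAdj M P (elt (v a)) (elt (v (a + 1)))
  target : compAdj M P (elt (v n)) (snk j)

variable (M P) in
structure IsShortcutFreeWalk (v : ℕ → V) (n : ℕ) (j : ι) : Prop
    extends IsAugmentingWalk M P v n j where
  no_shortcut : ∀ a b, a + 1 < b → b ≤ n → ¬ compAdj M P (elt (v a)) (elt (v b))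
  no_early_exit : ∀ a < n, ∀ k, ¬ compAdj M P (elt (v a)) (snk k)

lemma exists_isAugmentingWalk (h : ReflTransGen (compAdj M P) src (snk j)) :
    ∃ v n, IsAugmentingWalk M P v n j := by
  obtain h | ⟨c, hc, hcj⟩ := h.cases_tail
  · cases h
  cases c with
  | src => exact hcj.elim
  | elt x =>
    obtain ⟨v, n, h0, hstep, rfl⟩ := exists_walk_of_reflTransGen_elt hc
    exact ⟨v, n, h0, hstep, hcj⟩
  | snk k => exact (not_compAdj_snk_left hcj).elim

lemma IsAugmentingWalk.splice {v : ℕ → V} {n a b : ℕ} (hw : IsAugmentingWalk M P v n j)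
    (hab : a < b) (hb : b ≤ n) (he : compAdj M P (elt (v a)) (elt (v b))) :
    IsAugmentingWalk M P (fun c => if c ≤ a then v c else v (c + (b - a - 1)))
      (n - (b - a - 1)) j where
  source := by simpa using hw.source
  step c hc := by
    split_ifs with h₁ h₂ h₂
    · exact hw.step c (by omega)
    · obtain rfl : c = a := by omega
      convert he using 3
      omega
    · omega
    · convert hw.step (c + (b - a - 1)) (by omega) using 3
      omega
  target := by
    rw [if_neg (by omega), Nat.sub_add_cancel (by omega)]
    exact hw.target

lemma exists_isShortcutFreeWalk (h : ∃ v n j, IsAugmentingWalk M P v n j) :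
    ∃ v n j, IsShortcutFreeWalk M P v n j := by
  classical
  have hex : ∃ n, ∃ v j, IsAugmentingWalk M P v n j := by
    obtain ⟨v, n, j, hw⟩ := h
    exact ⟨n, v, j, hw⟩
  obtain ⟨v, j, hw⟩ := Nat.find_spec hex
  have hmin : ∀ m < Nat.find hex, ∀ v' j', ¬ IsAugmentingWalk M P v' m j' :=
    fun m hm v' j' h' => Nat.find_min hex hm ⟨v', j', h'⟩
  refine ⟨v, _, j, hw, fun a b hab hb he => ?_, fun a ha k he => ?_⟩
  · exact hmin _ (by omega) _ j (hw.splice (by omega) hb he)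
  · exact hmin a ha v k ⟨hw.source, fun c hc => hw.step c (by omega), he⟩

lemma IsShortcutFreeWalk.ne_last {v : ℕ → V} {n a : ℕ} (hw : IsShortcutFreeWalk M P v n j)
    (ha : a < n) : v a ≠ v n :=
  fun h => hw.no_early_exit a ha j (h ▸ hw.target)

section PreservedEdges

variable (hw : compAdj M P (elt w) (snk j)) (hxw : ¬ compAdj M P (elt x) (elt w))
  (hx : ∀ k, ¬ compAdj M P (elt x) (snk k))
include hw hxw hx

lemma compAdj_moveTo_iff (hind : ∀ k, (M k).Indep (P k)) (hyw : y ≠ w) :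
    compAdj M (moveTo P w j) (elt x) (elt y) ↔ compAdj M P (elt x) (elt y) := by
  simp only [compAdj_elt_elt]
  refine exists_congr fun k => ?_
  unfold moveTo
  split_ifs with hk
  · subst hk
    exact FinMatroid.isExchange_insert_iff hw.2 hw.1 (hx k) hyw
  · exact FinMatroid.isExchange_erase_iff (hind k) (hx k) (fun h => hxw ⟨k, h⟩) hyw

lemma not_compAdj_moveTo_snk (k : ι) : ¬ compAdj M (moveTo P w j) (elt x) (snk k) := by
  have hne : x ≠ w := by
    rintro rfl
    exact hx j hw
  simp only [compAdj_elt_snk, moveTo]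
  split_ifs
  · exact FinMatroid.not_augments_insert (hx k)
  · exact FinMatroid.not_augments_erase (hx k) (fun h => hxw ⟨k, h⟩) hne

end PreservedEdges

lemma IsShortcutFreeWalk.moveTo_last {v : ℕ → V} {n : ℕ} (hind : ∀ k, (M k).Indep (P k))
    (hw : IsShortcutFreeWalk M P v (n + 1) j) :
    ∃ i, IsShortcutFreeWalk M (moveTo P (v (n + 1)) j) v n i := by
  obtain ⟨i, hwi, hdep, hexch⟩ := hw.step n (Nat.lt_succ_self n)
  have hij : i ≠ j := by
    rintro rfl
    exact hw.target.1 hwi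
  have hvn : v n ∉ P i := fun h => hdep (by rw [insert_eq_of_mem h]; exact hind i)
  have hpres : ∀ a < n, ∀ y ≠ v (n + 1),
      compAdj M (moveTo P (v (n + 1)) j) (elt (v a)) (elt y) ↔ compAdj M P (elt (v a)) (elt y) :=
    fun a ha y hy => compAdj_moveTo_iff hw.target
      (hw.no_shortcut a (n + 1) (by omega) le_rfl) (hw.no_early_exit a (by omega)) hind hy
  refine ⟨i, ⟨⟨?_, fun a ha => ?_, ?_⟩, fun a b hab hb h => ?_, fun a ha k => ?_⟩⟩
  · rw [biUnion_moveTo, mem_insert, not_or]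
    exact ⟨hw.ne_last (Nat.succ_pos n), hw.source⟩
  · exact (hpres a ha _ (hw.ne_last (by omega))).2 (hw.step a (by omega))
  · simp only [compAdj_elt_snk, moveTo, if_neg hij]
    exact ⟨fun h => hvn (mem_of_mem_erase h), hexch⟩
  · exact hw.no_shortcut a b hab (by omega) ((hpres a (by omega) _ (hw.ne_last (by omega))).1 h)
  · exact not_compAdj_moveTo_snk hw.target (hw.no_shortcut a (n + 1) (by omega) le_rfl)
      (hw.no_early_exit a (by omega)) k

lemma IsShortcutFreeWalk.partitionable_insert {v : ℕ → V} {n : ℕ}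
    (hind : ∀ k, (M k).Indep (P k)) (hdisj : ∀ k l, k ≠ l → Disjoint (P k) (P l))
    (hw : IsShortcutFreeWalk M P v n j) :
    Partitionable M (insert (v 0) (univ.biUnion P)) := by
  induction n generalizing P j with
  | zero =>
    exact ⟨moveTo P (v 0) j, indep_moveTo hind hw.target.2, disjoint_moveTo hdisj,
      biUnion_moveTo⟩
  | succ n ih =>
    obtain ⟨i, hw'⟩ := hw.moveTo_last hind
    have hmem : v (n + 1) ∈ univ.biUnion P := by
      obtain ⟨k, hk, -⟩ := hw.step n (Nat.lt_succ_self n)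
      exact mem_biUnion.2 ⟨k, mem_univ k, hk⟩
    simpa [biUnion_moveTo, insert_eq_of_mem hmem] using
      ih (indep_moveTo hind hw.target.2) (disjoint_moveTo hdisj) hw'

end ExchangeGraph

section Reachability

variable {V ι : Type*} [DecidableEq V] [Fintype V] [DecidableEq ι] [Fintype ι]
  {M : ι → FinMatroid V} {P : ι → Finset V}

lemma card_le_of_forall_not_reachable (hind : ∀ k, (M k).Indep (P k))
    (hdisj : ∀ k l, k ≠ l → Disjoint (P k) (P l))
    (hT : ∀ j, ¬ ReflTransGen (compAdj M P) src (snk j)) {S' : Finset V}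
    (hS' : Partitionable M S') : S'.card ≤ (univ.biUnion P).card := by
  classical
  obtain ⟨Q, hQ, -, rfl⟩ := hS'
  set R := univ.filter fun v => ReflTransGen (compAdj M P) src (elt v)
  have hR : ∀ {v}, v ∈ R ↔ ReflTransGen (compAdj M P) src (elt v) := by simp [R]
  have hmax : ∀ k, ∀ v ∈ R \ (P k ∩ R), ¬ (M k).Indep (insert v (P k ∩ R)) := by
    intro k v hv
    obtain ⟨hvR, hvP⟩ : v ∈ R ∧ v ∉ P k := by simp only [mem_sdiff, mem_inter] at hv; tauto
    have hdep : ¬ (M k).Indep (insert v (P k)) := fun h => hT k ((hR.1 hvR).tail ⟨hvP, h⟩)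
    refine FinMatroid.not_indep_insert_of_forall_erase (hind k) inter_subset_left hdep
      fun u hu h => ?_
    obtain ⟨huP, huR⟩ : u ∈ P k ∧ u ∉ R := by simp only [mem_sdiff, mem_inter] at hu; tauto
    exact huR (hR.2 ((hR.1 hvR).tail ⟨k, huP, hdep, h⟩))
  refine card_biUnion_le_of_card_inter_le hdisj (fun v hv => hR.2 (.single hv)) fun k => ?_
  exact FinMatroid.card_le_of_forall_not_indep_insert
    ((M k).indep_subset (hind k) inter_subset_left) (hmax k)
    ((M k).indep_subset (hQ k) inter_subset_left) inter_subset_right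

end Reachability

/-- There is a partitionable set larger than `S` iff some sink `t_j` is reachable
from `s` in the compressed exchange graph. -/
theorem augmentable_iff_reachable {V ι : Type*} [DecidableEq V] [Fintype V]
    [DecidableEq ι] [Fintype ι] (M : ι → FinMatroid V) (P : ι → Finset V) (S : Finset V)
    (hind : ∀ i, (M i).Indep (P i)) (hdisj : ∀ i j, i ≠ j → Disjoint (P i) (P j))
    (hS : Finset.univ.biUnion P = S) :
    (∃ S' : Finset V, Partitionable M S' ∧ S.card + 1 ≤ S'.card) ↔
      (∃ j : ι, Relation.ReflTransGen (compAdj M P) CVert.src (CVert.snk j)) := by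
  subst hS
  constructor
  · rintro ⟨S', hS', hcard⟩
    by_contra! hT
    have := card_le_of_forall_not_reachable hind hdisj hT hS'
    omega
  · rintro ⟨j, h⟩
    obtain ⟨v, n, hw⟩ := exists_isAugmentingWalk h
    obtain ⟨v, n, j, hw⟩ := exists_isShortcutFreeWalk ⟨v, n, j, hw⟩
    exact ⟨_, hw.partitionable_insert hind hdisj, by rw [card_insert_of_notMem hw.source]⟩
end
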